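/- arXiv:2106.09375 — 5 statements merged into one kernel-verified Lean document; each statement's English description precedes it below -/
import Mathlib

section
/- Let A ∈ ℝ^{m×n}. If every s-sparse vector x⁰ ∈ ℝⁿ is the unique solution of min ‖x‖₁ subject to Ax = Ax⁰, then A satisfies the null space property of order s: for all nonzero v ∈ N(A) and all S with |S| ≤ s, ‖v_S‖₁ < ‖v_{S̄}‖₁. -/
open Finset

theorem l1_recovery_implies_nsp {m n : ℕ} (A : Matrix (Fin m) (Fin n) ℝ) (s : ℕ)
    (hrec : ∀ x₀ : Fin n → ℝ, (Finset.univ.filter (fun i => x₀ i ≠ 0)).card ≤ s →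
      ∀ x : Fin n → ℝ, A.mulVec x = A.mulVec x₀ → x ≠ x₀ →
        ∑ i, |x₀ i| < ∑ i, |x i|) :
    ∀ v : Fin n → ℝ, A.mulVec v = 0 → v ≠ 0 →
      ∀ S : Finset (Fin n), S.card ≤ s →
        ∑ i ∈ S, |v i| < ∑ i ∈ Sᶜ, |v i| := by
  intro v hv hv0 S hS
  set x₀ : Fin n → ℝ := fun i => if i ∈ S then v i else 0 with hx₀
  set x : Fin n → ℝ := fun i => if i ∈ S then 0 else -v i with hx
  have hsub : x₀ - v = x := by
    funext i
    by_cases h : i ∈ S <;> simp [hx₀, hx, h]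
  have hsparse : (Finset.univ.filter (fun i => x₀ i ≠ 0)).card ≤ s := by
    refine le_trans (Finset.card_le_card ?_) hS
    intro i hi
    simp only [Finset.mem_filter, hx₀] at hi
    by_contra h
    exact hi.2 (if_neg h)
  have hAx : A.mulVec x = A.mulVec x₀ := by
    rw [← hsub, Matrix.mulVec_sub, hv, sub_zero]
  have hne : x ≠ x₀ := by
    intro h
    apply hv0
    have : x₀ - v = x₀ := by rw [hsub, h]
    funext i
    have := congrFun this i
    simpa using sub_eq_self.mp this
  have key := hrec x₀ hsparse x hAx hne
  have h1 : ∑ i, |x₀ i| = ∑ i ∈ S, |v i| := by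
    rw [← Finset.sum_filter_add_sum_filter_not Finset.univ (· ∈ S)]
    have e : Finset.univ.filter (· ∈ S) = S := by ext i; simp
    rw [e]
    have h1 : ∀ i ∈ S, |x₀ i| = |v i| := by intro i hi; simp [hx₀, hi]
    have h2 : ∀ i ∈ Finset.univ.filter (fun i => ¬ i ∈ S), |x₀ i| = 0 := by
      intro i hi
      simp only [Finset.mem_filter] at hi
      simp [hx₀, hi.2]
    rw [Finset.sum_congr rfl h1, Finset.sum_congr rfl h2]
    simp
  have h2 : ∑ i, |x i| = ∑ i ∈ Sᶜ, |v i| := by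
    rw [← Finset.sum_filter_add_sum_filter_not Finset.univ (· ∈ S)]
    have : ∀ i ∈ Finset.univ.filter (fun i => ¬ i ∈ S), |x i| = |v i| := by
      intro i hi
      simp only [Finset.mem_filter] at hi
      simp [hx, hi.2]
    rw [Finset.sum_congr rfl this]
    have e : Finset.univ.filter (fun i => ¬ i ∈ S) = Sᶜ := by
      ext i; simp
    rw [e]
    have : ∀ i ∈ S, |x i| = 0 := by intro i hi; simp [hx, hi]
    simp [Finset.sum_congr rfl this]
  rw [h1, h2] at key
  exact key
end

section
/- Let A ∈ ℝ^{m×n} satisfy the nonnegative null space property of order s: for every nonzero v ∈ N(A) with v_{S̄} ≤ 0 (for some S with |S| ≤ s) it holds that Σᵢ vᵢ < 0. Then every s-sparse nonnegative vector x⁰ ≥ 0 is the unique solution of min ‖x‖₁ subject to Ax = Ax⁰ and x ≥ 0. -/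
open Finset

theorem nonneg_nsp_implies_recovery {m n : ℕ} (A : Matrix (Fin m) (Fin n) ℝ) (s : ℕ)
    (hNSP : ∀ v : Fin n → ℝ, A.mulVec v = 0 → v ≠ 0 →
      ∀ S : Finset (Fin n), S.card ≤ s → (∀ i ∈ Sᶜ, v i ≤ 0) →
        ∑ i, v i < 0) :
    ∀ x₀ : Fin n → ℝ, (Finset.univ.filter (fun i => x₀ i ≠ 0)).card ≤ s →
      (∀ i, 0 ≤ x₀ i) →
      ∀ x : Fin n → ℝ, A.mulVec x = A.mulVec x₀ → (∀ i, 0 ≤ x i) → x ≠ x₀ →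
        ∑ i, |x₀ i| < ∑ i, |x i| := by
  intro x₀ hcard hx₀ x hAx hx hne
  have hv : A.mulVec (x₀ - x) = 0 := by
    rw [Matrix.mulVec_sub, hAx, sub_self]
  have hvne : (x₀ - x) ≠ 0 := by
    intro h; apply hne; funext i
    have := congrFun h i
    simp [Pi.sub_apply] at this
    linarith
  have hkey := hNSP (x₀ - x) hv hvne (Finset.univ.filter (fun i => x₀ i ≠ 0)) hcard ?_
  · have h1 : ∀ i, |x₀ i| = x₀ i := fun i => abs_of_nonneg (hx₀ i)
    have h2 : ∀ i, |x i| = x i := fun i => abs_of_nonneg (hx i)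
    simp only [h1, h2]
    have : ∑ i, (x₀ - x) i = ∑ i, x₀ i - ∑ i, x i := by
      simp [Finset.sum_sub_distrib]
    linarith [this ▸ hkey]
  · intro i hi
    simp only [Finset.mem_compl, Finset.mem_filter, Finset.mem_univ, true_and, not_not] at hi
    simp [Pi.sub_apply, hi]
    exact hx i
end

section
/- For rational measurement matrices and no variable bounds, the integral null space property coincides with the classical one: for A ∈ ℚ^{m×n}, the condition '‖v_S‖₁ < ‖v_{S̄}‖₁ for all nonzero v ∈ N(A) ∩ ℤⁿ and all |S| ≤ s' holds if and only if it holds for all nonzero v ∈ N(A) ∩ ℝⁿ. -/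
/-!
Let `v ∈ N(A)` be real and nonzero with `‖v_S‖₁ ≥ ‖v_S̄‖₁`, and let `ε ∈ {±1}ⁿ` be a sign pattern of
`v`. On the orthant `{x : εᵢ xᵢ ≥ 0}` the violated inequality becomes the linear inequality
`∑_{i ∈ S} εᵢ xᵢ ≥ ∑_{i ∉ S} εᵢ xᵢ`, so `v` lies in a polyhedral cone cut out by rational data, all
of whose nonzero points violate the null space property. Rational points are dense in such a cone:
the inequalities tight at `v` are added to the equations `Ax = 0`, the rational points of that
rational null space are dense in it (a rational projection onto it is continuous), and near `v`
the other inequalities hold strictly. Clearing denominators of a nonzero rational point of the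
cone gives an integral violator.
-/

open Finset Matrix

theorem LinearMap.exists_comp_comp_eq_self {K V W : Type*} [Field K] [AddCommGroup V]
    [Module K V] [AddCommGroup W] [Module K W] (f : V →ₗ[K] W) :
    ∃ g : W →ₗ[K] V, f ∘ₗ g ∘ₗ f = f := by
  obtain ⟨g, hg⟩ := f.rangeRestrict.exists_rightInverse_of_surjective f.range_rangeRestrict
  obtain ⟨h, hh⟩ := (range f).subtype.exists_leftInverse_of_injective (range f).ker_subtype
  refine ⟨g ∘ₗ h, ?_⟩
  calc f ∘ₗ g ∘ₗ h ∘ₗ f = (range f).subtype ∘ₗ (f.rangeRestrict ∘ₗ g) ∘ₗ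
        (h ∘ₗ (range f).subtype) ∘ₗ f.rangeRestrict := rfl
    _ = f := by rw [hg, hh]; rfl

theorem Matrix.exists_mul_mul_eq_self {K m n : Type*} [Field K] [Fintype m] [Fintype n]
    (B : Matrix m n K) : ∃ C : Matrix n m K, B * C * B = B := by
  classical
  obtain ⟨g, hg⟩ := (toLin' B).exists_comp_comp_eq_self
  refine ⟨LinearMap.toMatrix' g, toLin'.injective ?_⟩
  rwa [toLin'_mul, toLin'_mul, toLin'_toMatrix', LinearMap.comp_assoc]

theorem Matrix.map_ratCast_mulVec {K m n : Type*} [DivisionRing K] [CharZero K] [Fintype n]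
    (M : Matrix m n ℚ) (q : n → ℚ) :
    M.map (↑) *ᵥ ((↑) ∘ q : n → K) = (↑) ∘ (M *ᵥ q) :=
  funext fun i => (RingHom.map_mulVec (Rat.castHom K) M q i).symm

theorem exists_rat_mulVec_eq_zero_mem_of_isOpen {m ι : Type*} [Fintype m] [Fintype ι]
    (B : Matrix m ι ℚ) {v : ι → ℝ} (hv : B.map (↑) *ᵥ v = 0)
    {U : Set (ι → ℝ)} (hU : IsOpen U) (hvU : v ∈ U) :
    ∃ u : ι → ℚ, B.map (↑) *ᵥ ((↑) ∘ u : ι → ℝ) = 0 ∧ (↑) ∘ u ∈ U := by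
  classical
  obtain ⟨C, hC⟩ := B.exists_mul_mul_eq_self
  -- a rational projection onto the null space of `B`
  set M : Matrix ι ι ℚ := 1 - C * B
  have hBM : B * M = 0 := by rw [Matrix.mul_sub, Matrix.mul_one, ← Matrix.mul_assoc, hC, sub_self]
  have hMv : M.map (↑) *ᵥ v = v := by
    change (Rat.castHom ℝ).mapMatrix (1 - C * B) *ᵥ v = v
    rw [map_sub, map_one, sub_mulVec, one_mulVec, RingHom.mapMatrix_apply, Matrix.map_mul,
      ← mulVec_mulVec, Rat.coe_castHom, hv, mulVec_zero, sub_zero]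
  have hopen : IsOpen ((M.map (↑) *ᵥ ·) ⁻¹' U) :=
    hU.preimage (continuous_const.matrix_mulVec continuous_id)
  obtain ⟨q, hq⟩ := (DenseRange.piMap fun _ => Rat.denseRange_cast).exists_mem_open hopen
    ⟨v, by simpa [hMv]⟩
  refine ⟨M *ᵥ q, ?_, ?_⟩
  · rw [map_ratCast_mulVec, mulVec_mulVec, hBM, zero_mulVec]
    exact funext fun _ => Rat.cast_zero
  · rw [← map_ratCast_mulVec]; exact hq

theorem exists_rat_mulVec_eq_zero_nonneg_mem_of_isOpen {m k ι : Type*} [Fintype m]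
    [Fintype k] [Fintype ι] (B : Matrix m ι ℚ) (L : Matrix k ι ℚ) {v : ι → ℝ}
    (hBv : B.map (↑) *ᵥ v = 0) (hLv : 0 ≤ L.map (↑) *ᵥ v) {U : Set (ι → ℝ)} (hU : IsOpen U)
    (hvU : v ∈ U) :
    ∃ u : ι → ℚ, B.map (↑) *ᵥ ((↑) ∘ u : ι → ℝ) = 0 ∧ 0 ≤ L.map (↑) *ᵥ ((↑) ∘ u : ι → ℝ) ∧
      (↑) ∘ u ∈ U := by
  classical
  -- the inequalities tight at `v` become equations; the others hold strictly near `v`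
  set T := {j // (L.map (↑) *ᵥ v) j = 0}
  set B' : Matrix (m ⊕ T) ι ℚ := fromRows B (L.submatrix (↑) id)
  have hB'v : B'.map (↑) *ᵥ v = 0 := by
    rw [fromRows_map, fromRows_mulVec, hBv]
    ext (j | j)
    · rfl
    · exact j.2
  set U' := U ∩ {x | ∀ j, (L.map (↑) *ᵥ v) j ≠ 0 → 0 < (L.map (↑) *ᵥ x) j}
  have hU' : IsOpen U' := by
    refine hU.inter ?_
    simp only [Set.ofPred_forall]
    refine isOpen_iInter_of_finite fun j => ?_
    by_cases hj : (L.map (↑) *ᵥ v) j = 0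
    · simp [hj]
    · simpa [hj] using isOpen_lt continuous_const
        ((continuous_apply j).comp (continuous_const.matrix_mulVec continuous_id))
  obtain ⟨u, hu, huU, hu_slack⟩ := exists_rat_mulVec_eq_zero_mem_of_isOpen B' hB'v hU'
    ⟨hvU, fun j hj => (hLv j).lt_of_ne' hj⟩
  rw [fromRows_map, fromRows_mulVec] at hu
  refine ⟨u, funext fun i => congrFun hu (.inl i), fun j => ?_, huU⟩
  by_cases hj : (L.map (↑) *ᵥ v) j = 0
  · exact (congrFun hu (.inr ⟨j, hj⟩)).ge
  · exact (hu_slack j hj).le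

theorem sum_abs_sub_sum_abs_compl_eq_dotProduct {R ι : Type*} [CommRing R] [LinearOrder R]
    [Fintype ι] [DecidableEq ι] (S : Finset ι) {ε x : ι → R} (hx : ∀ i, |x i| = ε i * x i) :
    ∑ i ∈ S, |x i| - ∑ i ∈ Sᶜ, |x i| = S.piecewise ε (-ε) ⬝ᵥ x := by
  rw [dotProduct, ← sum_add_sum_compl S, sub_eq_add_neg, ← sum_neg_distrib]
  congr 1 <;> refine sum_congr rfl fun i hi => ?_
  · rw [hx, piecewise_eq_of_mem _ _ _ hi]
  · rw [hx, piecewise_eq_of_notMem _ _ _ (mem_compl.1 hi), Pi.neg_apply, neg_mul]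

theorem exists_rat_mulVec_eq_zero_sum_abs_compl_le {m ι : Type*} [Fintype m] [Fintype ι]
    [DecidableEq ι] (B : Matrix m ι ℚ) (S : Finset ι) {v : ι → ℝ} (hBv : B.map (↑) *ᵥ v = 0)
    (hv0 : v ≠ 0) (hvS : ∑ i ∈ Sᶜ, |v i| ≤ ∑ i ∈ S, |v i|) :
    ∃ u : ι → ℚ, B.map (↑) *ᵥ ((↑) ∘ u : ι → ℝ) = 0 ∧ ((↑) ∘ u : ι → ℝ) ≠ 0 ∧
      ∑ i ∈ Sᶜ, |(u i : ℝ)| ≤ ∑ i ∈ S, |(u i : ℝ)| := by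
  set ε : ι → ℚ := fun i => if 0 ≤ v i then 1 else -1
  set L : Matrix (ι ⊕ Unit) ι ℚ := fromRows (diagonal ε) (replicateRow Unit (S.piecewise ε (-ε)))
  have hLx : ∀ x : ι → ℝ, L.map (↑) *ᵥ x =
      Sum.elim (fun i => (ε i : ℝ) * x i)
        (fun _ => S.piecewise (fun i => (ε i : ℝ)) (-fun i => (ε i : ℝ)) ⬝ᵥ x) := by
    intro x
    rw [fromRows_map, fromRows_mulVec]
    congr 1
    · ext i
      simp [mulVec_diagonal]
    · ext
      simp [mulVec, dotProduct, Finset.piecewise, apply_ite]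
  have habs : ∀ i (x : ℝ), 0 ≤ (ε i : ℝ) * x → |x| = ε i * x := by
    intro i x
    by_cases h : 0 ≤ v i <;> simp [ε, h]
  have hL : ∀ x : ι → ℝ, 0 ≤ L.map (↑) *ᵥ x → ∑ i ∈ Sᶜ, |x i| ≤ ∑ i ∈ S, |x i| := by
    intro x hx
    rw [hLx] at hx
    have hxε : ∀ i, |x i| = ε i * x i := fun i => habs i (x i) (hx (.inl i))
    have hxS : 0 ≤ S.piecewise (fun i => (ε i : ℝ)) (-fun i => (ε i : ℝ)) ⬝ᵥ x := hx (.inr ())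
    linarith [sum_abs_sub_sum_abs_compl_eq_dotProduct S hxε]
  have hvε : ∀ i, |v i| = ε i * v i := by
    intro i
    rcases le_or_gt 0 (v i) with h | h
    · simp [ε, h, abs_of_nonneg h]
    · simp [ε, not_le.2 h, abs_of_neg h]
  have hLv : 0 ≤ L.map (↑) *ᵥ v := by
    rw [hLx]
    rintro (i | -)
    · simp [← hvε]
    · simpa [← sum_abs_sub_sum_abs_compl_eq_dotProduct S hvε] using hvS
  obtain ⟨u, hu, hLu, hu0⟩ :=
    exists_rat_mulVec_eq_zero_nonneg_mem_of_isOpen B L hBv hLv isOpen_compl_singleton hv0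
  exact ⟨u, hu, hu0, hL _ hLu⟩

theorem exists_nat_mul_eq_intCast {ι : Type*} [Fintype ι] (u : ι → ℚ) :
    ∃ N : ℕ, 0 < N ∧ ∀ i, ∃ z : ℤ, N * u i = z := by
  refine ⟨∏ i, (u i).den, prod_pos fun i _ => (u i).pos, fun i => ?_⟩
  obtain ⟨k, hk⟩ := dvd_prod_of_mem (fun i => (u i).den) (mem_univ i)
  refine ⟨k * (u i).num, ?_⟩
  rw [hk, Nat.cast_mul, mul_right_comm, Rat.den_mul_eq_num]
  push_cast
  ring

theorem integral_nsp_iff_classical_nsp_of_rational {m n : ℕ}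
    (A : Matrix (Fin m) (Fin n) ℚ) (s : ℕ) :
    (∀ v : Fin n → ℝ, (∀ i, ∃ z : ℤ, v i = (z : ℝ)) →
        (A.map (fun q : ℚ => (q : ℝ))).mulVec v = 0 → v ≠ 0 →
        ∀ S : Finset (Fin n), S.card ≤ s →
          ∑ i ∈ S, |v i| < ∑ i ∈ Sᶜ, |v i|) ↔
    (∀ v : Fin n → ℝ,
        (A.map (fun q : ℚ => (q : ℝ))).mulVec v = 0 → v ≠ 0 →
        ∀ S : Finset (Fin n), S.card ≤ s →
          ∑ i ∈ S, |v i| < ∑ i ∈ Sᶜ, |v i|) := by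
  refine ⟨fun hint v hv hv0 S hS => ?_, fun h v _ => h v⟩
  by_contra! hvS
  obtain ⟨u, hu, hu0, huS⟩ := exists_rat_mulVec_eq_zero_sum_abs_compl_le A S hv hv0 hvS
  obtain ⟨N, hN, hNu⟩ := exists_nat_mul_eq_intCast u
  have hN' : (0 : ℝ) < N := by exact_mod_cast hN
  have hNu_int : ∀ i, ∃ z : ℤ, ((N : ℝ) • ((↑) ∘ u : Fin n → ℝ)) i = z := fun i => by
    obtain ⟨z, hz⟩ := hNu i
    exact ⟨z, by simpa using congrArg ((↑) : ℚ → ℝ) hz⟩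
  have hNuS := hint _ hNu_int (by rw [mulVec_smul, hu, smul_zero])
    (smul_ne_zero hN'.ne' hu0) S hS
  simp only [Pi.smul_apply, Function.comp_apply, smul_eq_mul, abs_mul, abs_of_pos hN',
    ← mul_sum] at hNuS
  exact (lt_of_mul_lt_mul_left hNuS hN'.le).not_ge huS
end

section
/- Let Ψ ∈ ℂ^{N×P} have unit-norm columns with mutual coherence μ = max_{i≠j}|ψᵢᴴψⱼ|. If x⁰ is s-sparse with s < (1 + 1/μ)/2, then x⁰ is the unique s-sparse solution of Ψx = Ψx⁰. -/
/-!
If `Ψ x = Ψ x₀` with `x ≠ x₀`, the difference `d = x - x₀` lies in the kernel of the Gram matrix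
`G = Ψᴴ Ψ`, which has unit diagonal and off-diagonal entries of modulus at most `μ`. Restricted to
the support `S` of `d`, `G` is singular, so by Gershgorin's theorem it is not strictly diagonally
dominant: `1 ≤ μ (|S| - 1)`. But `|S| ≤ 2s < 1 + 1/μ`.
-/

open Finset Matrix

namespace Matrix

variable {n K : Type*}

theorem conjTranspose_mul_self_apply_self {m 𝕜 : Type*} [Fintype m] [RCLike 𝕜]
    (A : Matrix m n 𝕜) (k : n) : (Aᴴ * A) k k = ((∑ i, ‖A i k‖ ^ 2 : ℝ) : 𝕜) := by
  simp only [mul_apply, conjTranspose_apply, RCLike.star_def, RCLike.conj_mul]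
  push_cast
  rfl

variable [Fintype n]

theorem submatrix_val_mulVec_apply_of_support_subset [NonUnitalNonAssocSemiring K]
    (G : Matrix n n K) (S : Finset n) {v : n → K} (hv : ∀ j ∉ S, v j = 0) (k : S) :
    (G.submatrix (↑) (↑) *ᵥ fun j : S => v j) k = (G *ᵥ v) k := by
  simp only [mulVec, dotProduct, submatrix_apply]
  rw [sum_coe_sort S (fun j => G k j * v j)]
  exact sum_subset (subset_univ S) fun j _ hj => by rw [hv j hj, mul_zero]

variable [DecidableEq n]

theorem one_le_mul_card_support_sub_one_of_mulVec_eq_zero [NormedField K] [DecidableEq K]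
    {G : Matrix n n K} {μ : ℝ} (hdiag : ∀ k, G k k = 1) (hoff : ∀ i j, i ≠ j → ‖G i j‖ ≤ μ)
    {v : n → K} (hv : v ≠ 0) (hGv : G *ᵥ v = 0) :
    1 ≤ μ * ((univ.filter fun i => v i ≠ 0).card - 1 : ℝ) := by
  set S := univ.filter fun i => v i ≠ 0
  have hvS : ∀ j ∉ S, v j = 0 := fun j hj => by simpa [S] using hj
  have hdet : (G.submatrix ((↑) : S → n) (↑)).det = 0 := by
    refine exists_mulVec_eq_zero_iff.mp ⟨fun j : S => v j, ?_, ?_⟩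
    · obtain ⟨i, hi⟩ := Function.ne_iff.mp hv
      exact Function.ne_iff.mpr ⟨⟨i, by simpa [S] using hi⟩, hi⟩
    · ext k
      rw [submatrix_val_mulVec_apply_of_support_subset G S hvS, hGv]
      rfl
  obtain ⟨k, hk⟩ : ∃ k : S, 1 ≤ ∑ j ∈ univ.erase k, ‖G k j‖ := by
    by_contra! h
    refine det_ne_zero_of_sum_row_lt_diag (fun k => ?_) hdet
    simpa [hdiag] using h k
  calc (1 : ℝ) ≤ ∑ j ∈ univ.erase k, ‖G k j‖ := hk
    _ ≤ ∑ _j ∈ univ.erase k, μ :=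
      sum_le_sum fun j hj => hoff k j fun h => (ne_of_mem_erase hj) (Subtype.ext h).symm
    _ = μ * (S.card - 1 : ℝ) := by
      have hS : 0 < S.card := card_pos.mpr ⟨k, k.2⟩
      rw [sum_const, card_erase_of_mem (mem_univ k), card_univ, Fintype.card_coe,
        nsmul_eq_mul, Nat.cast_pred hS, mul_comm]

end Matrix

theorem Pi.card_filter_sub_ne_zero_le {ι G : Type*} [Fintype ι] [DecidableEq ι] [AddGroup G]
    [DecidableEq G] (x y : ι → G) :
    (univ.filter fun i => (x - y) i ≠ 0).card ≤
      (univ.filter fun i => x i ≠ 0).card + (univ.filter fun i => y i ≠ 0).card := by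
  refine (card_le_card fun i => ?_).trans (card_union_le _ _)
  simp only [mem_filter, mem_union, mem_univ, true_and, Pi.sub_apply]
  contrapose!
  rintro ⟨hx, hy⟩
  rw [hx, hy, sub_self]

theorem coherence_sparse_uniqueness {N P : ℕ} (Ψ : Matrix (Fin N) (Fin P) ℂ)
    (hunit : ∀ k : Fin P, ∑ i, ‖Ψ i k‖ ^ 2 = 1)
    (μ : ℝ) (hμpos : 0 < μ)
    (hμ : ∀ i j : Fin P, i ≠ j →
      ‖∑ x, (starRingEnd ℂ) (Ψ x i) * Ψ x j‖ ≤ μ)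
    (s : ℕ) (hs : (s : ℝ) < (1 + 1 / μ) / 2) :
    ∀ x₀ x : Fin P → ℂ,
      (Finset.univ.filter (fun i => x₀ i ≠ 0)).card ≤ s →
      (Finset.univ.filter (fun i => x i ≠ 0)).card ≤ s →
      Ψ.mulVec x = Ψ.mulVec x₀ → x = x₀ := by
  intro x₀ x hx₀ hx heq
  by_contra hne
  have hker : (Ψᴴ * Ψ) *ᵥ (x - x₀) = 0 := by
    rw [← mulVec_mulVec, mulVec_sub, heq, sub_self, mulVec_zero]
  have hdiag : ∀ k, (Ψᴴ * Ψ) k k = 1 := fun k => by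
    rw [conjTranspose_mul_self_apply_self, hunit, RCLike.ofReal_one]
  have hspark :=
    one_le_mul_card_support_sub_one_of_mulVec_eq_zero hdiag hμ (sub_ne_zero.mpr hne) hker
  have hcard : ((univ.filter fun i => (x - x₀) i ≠ 0).card : ℝ) ≤ 2 * s := by
    exact_mod_cast (Pi.card_filter_sub_ne_zero_le x x₀).trans (by omega)
  have hμs : μ * (2 * s - 1) < 1 := by
    calc μ * (2 * s - 1) < μ * (1 / μ) := by gcongr; linarith
      _ = 1 := mul_one_div_cancel hμpos.ne'
  have := mul_le_mul_of_nonneg_left (sub_le_sub_right hcard 1) hμpos.le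
  linarith
end

section
/- Let z ∈ ℝ^M with z ≥ 0, A ∈ ℂ^{M×K}, and for a fixed point x⁽ˡ⁾ define z⁽ˡ⁾ = z ⊙ e^{j arg(Ax⁽ˡ⁾)} (componentwise). Then the function f̄(x) = (1/2)‖z⁽ˡ⁾ − Ax‖₂² is an upper bound of f(x) = (1/2)‖z − |Ax|‖₂² for all x ∈ ℂ^K, and f̄(x⁽ˡ⁾) = f(x⁽ˡ⁾). -/
open Finset

/-! The majorization is the reverse triangle inequality `|‖v‖ - ‖w‖| ≤ ‖v - w‖` applied
componentwise with `v = z⁽ˡ⁾ᵢ`, whose modulus is `zᵢ`; at `x⁽ˡ⁾` the vectors `z⁽ˡ⁾ᵢ` and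
`(A x⁽ˡ⁾)ᵢ` have the same phase, so the inequality is an equality there. -/

lemma sq_norm_sub_norm_le_sq_norm_sub {E : Type*} [SeminormedAddCommGroup E] (v w : E) :
    (‖v‖ - ‖w‖) ^ 2 ≤ ‖v - w‖ ^ 2 :=
  sq_le_sq' (neg_le_of_abs_le (abs_norm_sub_norm_le v w)) (norm_sub_norm_le v w)

namespace Complex

lemma norm_ofReal_mul_exp_mul_I {r : ℝ} (hr : 0 ≤ r) (θ : ℝ) :
    ‖(r : ℂ) * exp (θ * I)‖ = r := by
  rw [norm_mul, norm_exp_ofReal_mul_I, mul_one, Complex.norm_of_nonneg hr]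

lemma sq_sub_norm_le_sq_norm_ofReal_mul_exp_sub {r : ℝ} (hr : 0 ≤ r) (θ : ℝ) (w : ℂ) :
    (r - ‖w‖) ^ 2 ≤ ‖(r : ℂ) * exp (θ * I) - w‖ ^ 2 := by
  simpa only [norm_ofReal_mul_exp_mul_I hr] using
    sq_norm_sub_norm_le_sq_norm_sub ((r : ℂ) * exp (θ * I)) w

lemma sq_sub_norm_eq_sq_norm_ofReal_mul_exp_arg_sub (r : ℝ) (w : ℂ) :
    (r - ‖w‖) ^ 2 = ‖(r : ℂ) * exp (w.arg * I) - w‖ ^ 2 := by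
  have hphase : (r : ℂ) * exp (w.arg * I) - w = ((r - ‖w‖ : ℝ) : ℂ) * exp (w.arg * I) := by
    rw [ofReal_sub, sub_mul, norm_mul_exp_arg_mul_I]
  rw [hphase, norm_mul, norm_exp_ofReal_mul_I, mul_one, norm_real, Real.norm_eq_abs, sq_abs]

end Complex

theorem smooth_majorization_phase_retrieval {M K : ℕ}
    (z : Fin M → ℝ) (hz : ∀ i, 0 ≤ z i)
    (A : Matrix (Fin M) (Fin K) ℂ) (xl : Fin K → ℂ) :
    let zl : Fin M → ℂ :=
      fun i => (z i : ℂ) * Complex.exp ((A.mulVec xl i).arg * Complex.I)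
    (∀ x : Fin K → ℂ,
      (1 / 2) * ∑ i, (z i - ‖A.mulVec x i‖) ^ 2 ≤
        (1 / 2) * ∑ i, ‖zl i - A.mulVec x i‖ ^ 2) ∧
    (1 / 2) * ∑ i, (z i - ‖A.mulVec xl i‖) ^ 2 =
      (1 / 2) * ∑ i, ‖zl i - A.mulVec xl i‖ ^ 2 := by
  intro zl
  refine ⟨fun x => ?_, ?_⟩
  · refine mul_le_mul_of_nonneg_left (sum_le_sum fun i _ => ?_) (by norm_num)
    exact Complex.sq_sub_norm_le_sq_norm_ofReal_mul_exp_sub (hz i) _ _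
  · congr 1
    exact sum_congr rfl fun i _ => Complex.sq_sub_norm_eq_sq_norm_ofReal_mul_exp_arg_sub _ _
end
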